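/- Fix 0 < p < ε < 1/2 and a positive integer r. Let K be a p-core 0-core CRG with optimizer μ (full support, stationarity (M_K(p)μ)_u = g for all u, where g = g_K(p)). If g < (1−ε)p/r, then for every black vertex v of K: the weighted gray-degree satisfies d_G(v) > 1 − 1/r + ε/r, and μ(v) < p/r. -/

import Mathlib

open Finset

inductive EColor | white | black | gray
deriving DecidableEq

/-- The `p`-weight of an edge color: `p` for white, `1-p` for black, `0` for gray. -/
def wval (p : ℝ) : EColor → ℝ
  | .white => p
  | .black => 1 - p
  | .gray => 0

/-- The matrix `M_K(p)` of a CRG given by vertex colors `vb` (`true` = black)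
and edge colors `ec`. -/
def Mmat {V : Type*} [DecidableEq V] (vb : V → Bool) (ec : V → V → EColor) (p : ℝ)
    (x y : V) : ℝ :=
  if x = y then (if vb x then 1 - p else p) else wval p (ec x y)

/-- `μ` is a probability mass. -/
def IsProb {V : Type*} [Fintype V] (μ : V → ℝ) : Prop :=
  (∀ x, 0 ≤ μ x) ∧ ∑ x, μ x = 1

/-- The quadratic form `⟨μ, M_K(p) μ⟩`. -/
def QF {V : Type*} [Fintype V] [DecidableEq V] (vb : V → Bool) (ec : V → V → EColor)
    (p : ℝ) (μ : V → ℝ) : ℝ :=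
  ∑ x, ∑ y, μ x * Mmat vb ec p x y * μ y

/-- `g` is the minimum of the quadratic form over probability masses, i.e. `g = g_K(p)`. -/
def gIs {V : Type*} [Fintype V] [DecidableEq V] (vb : V → Bool) (ec : V → V → EColor)
    (p g : ℝ) : Prop :=
  IsLeast {t | ∃ μ : V → ℝ, IsProb μ ∧ t = QF vb ec p μ} g

/-- The weighted gray-degree `d_G(u) = ∑_{v : uv gray} μ(v)`. -/
def grayDeg {V : Type*} [Fintype V] [DecidableEq V] (ec : V → V → EColor) (μ : V → ℝ)
    (u : V) : ℝ :=
  ∑ v ∈ Finset.univ.filter (fun v => v ≠ u ∧ ec u v = EColor.gray), μ v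

section Neighbourhood

variable {V : Type*} [Fintype V] [DecidableEq V]

def colorNbrs (ec : V → V → EColor) (c : EColor) (v : V) : Finset V :=
  univ.filter (fun u => u ≠ v ∧ ec v u = c)

theorem grayDeg_eq_sum_colorNbrs (ec : V → V → EColor) (μ : V → ℝ) (v : V) :
    grayDeg ec μ v = ∑ u ∈ colorNbrs ec .gray v, μ u :=
  rfl

theorem sum_eq_add_white_add_gray {M : Type*} [AddCommMonoid M] (ec : V → V → EColor) (v : V)
    (hnb : ∀ u, u ≠ v → ec v u ≠ .black) (f : V → M) :
    ∑ u, f u = f v + ∑ u ∈ colorNbrs ec .white v, f u + ∑ u ∈ colorNbrs ec .gray v, f u := by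
  have hsplit : ∀ u, f u = (if u = v then f u else 0) +
      (if u ≠ v ∧ ec v u = .white then f u else 0) +
      (if u ≠ v ∧ ec v u = .gray then f u else 0) := by
    intro u
    by_cases huv : u = v
    · simp [huv]
    · cases hc : ec v u with
      | white => simp [huv]
      | black => exact absurd hc (hnb u huv)
      | gray => simp [huv]
  rw [sum_congr rfl fun u _ => hsplit u, sum_add_distrib, sum_add_distrib,
    sum_ite_eq' univ v f, ← sum_filter, ← sum_filter]
  simp [colorNbrs]

theorem sum_Mmat_mul_of_black (vb : V → Bool) (ec : V → V → EColor) (p : ℝ) (μ : V → ℝ)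
    {v : V} (hv : vb v = true) (hnb : ∀ u, u ≠ v → ec v u ≠ .black) :
    ∑ u, Mmat vb ec p v u * μ u = (1 - p) * μ v + p * ∑ u ∈ colorNbrs ec .white v, μ u := by
  rw [sum_eq_add_white_add_gray ec v hnb, mul_sum]
  have hwhite : ∀ u ∈ colorNbrs ec .white v, Mmat vb ec p v u * μ u = p * μ u := by
    intro u hu
    obtain ⟨huv, hc⟩ := (mem_filter.mp hu).2
    simp [Mmat, Ne.symm huv, hc, wval]
  have hgray : ∀ u ∈ colorNbrs ec .gray v, Mmat vb ec p v u * μ u = 0 := by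
    intro u hu
    obtain ⟨huv, hc⟩ := (mem_filter.mp hu).2
    simp [Mmat, Ne.symm huv, hc, wval]
  rw [sum_congr rfl hwhite, sum_congr rfl hgray]
  simp [Mmat, hv]

theorem mul_grayDeg_of_stationary (vb : V → Bool) (ec : V → V → EColor) (p g : ℝ) (μ : V → ℝ)
    (hμ : ∑ u, μ u = 1) {v : V} (hv : vb v = true) (hnb : ∀ u, u ≠ v → ec v u ≠ .black)
    (hstat : ∑ u, Mmat vb ec p v u * μ u = g) :
    p * grayDeg ec μ v = p - g + (1 - 2 * p) * μ v := by
  have hmass := sum_eq_add_white_add_gray ec v hnb μ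
  rw [hμ] at hmass
  rw [sum_Mmat_mul_of_black vb ec p μ hv hnb] at hstat
  rw [grayDeg_eq_sum_colorNbrs]
  linear_combination -p * hmass - hstat

end Neighbourhood

theorem stmt7_general {V : Type*} [Fintype V] [DecidableEq V]
    (vb : V → Bool) (ec : V → V → EColor) (p ε g : ℝ) (r : ℕ) (hr : 1 ≤ r)
    (hp0 : 0 < p) (hpε : p < ε) (hε : ε < 1 / 2)
    (hnb : ∀ x y, x ≠ y → ec x y ≠ EColor.black)
    (μ : V → ℝ) (hμ : IsProb μ)
    (hstat : ∀ u, ∑ v, Mmat vb ec p u v * μ v = g)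
    (hlt : g < (1 - ε) * p / r) :
    ∀ v, vb v = true →
      1 - 1 / (r : ℝ) + ε / r < grayDeg ec μ v ∧ μ v < p / r := by
  intro v hv
  have hnbv : ∀ u, u ≠ v → ec v u ≠ .black := fun u huv => hnb v u (Ne.symm huv)
  have hr0 : (0 : ℝ) < r := by exact_mod_cast hr
  have hgr : g * r < (1 - ε) * p := (lt_div_iff₀ hr0).mp hlt
  have hμv : 0 ≤ μ v := hμ.1 v
  have hgray := mul_grayDeg_of_stationary vb ec p g μ hμ.2 hv hnbv (hstat v)
  have hblack : (1 - p) * μ v ≤ g := by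
    rw [← hstat v, sum_Mmat_mul_of_black vb ec p μ hv hnbv]
    exact le_add_of_nonneg_right (mul_nonneg hp0.le (sum_nonneg fun u _ => hμ.1 u))
  constructor
  · rw [show 1 - 1 / (r : ℝ) + ε / r = (r - 1 + ε) / r by field_simp, div_lt_iff₀ hr0]
    -- `p d_G(v) ≥ p - g` because `(1 - 2p) μ(v) ≥ 0`, and `p - g > p (r - 1 + ε) / r`
    have : p * (r - 1 + ε) < p * (grayDeg ec μ v * r) := by
      nlinarith [mul_nonneg (mul_nonneg (by linarith : (0 : ℝ) ≤ 1 - 2 * p) hμv) hr0.le]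
    exact lt_of_mul_lt_mul_left this hp0.le
  · -- `(1 - p) μ(v) r ≤ g r < (1 - ε) p < (1 - p) p`
    rw [lt_div_iff₀ hr0]
    nlinarith [mul_le_mul_of_nonneg_right hblack hr0.le, mul_nonneg hμv hr0.le]

/-- if `0 < p < ε < 1/2`, `K` is a `p`-core 0-core CRG with optimizer `μ` and
`g = g_K(p) < (1−ε)p/r`, then every black vertex `v` has `d_G(v) > 1 − 1/r + ε/r` and
`μ(v) < p/r`. -/
theorem stmt7 {V : Type*} [Fintype V] [DecidableEq V]
    (vb : V → Bool) (ec : V → V → EColor) (p ε g : ℝ) (r : ℕ) (hr : 1 ≤ r)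
    (hp0 : 0 < p) (hpε : p < ε) (hε : ε < 1 / 2)
    (hsymm : ∀ a b, ec a b = ec b a)
    (hnb : ∀ x y, x ≠ y → ec x y ≠ EColor.black)
    (hwe : ∀ x y, x ≠ y → ec x y = EColor.white → vb x = true ∧ vb y = true)
    (μ : V → ℝ) (hμ : IsProb μ) (hfull : ∀ x, 0 < μ x)
    (hg : gIs vb ec p g) (hμg : QF vb ec p μ = g)
    (hstat : ∀ u, ∑ v, Mmat vb ec p u v * μ v = g)
    (hlt : g < (1 - ε) * p / r) :
    ∀ v, vb v = true →
      1 - 1 / (r : ℝ) + ε / r < grayDeg ec μ v ∧ μ v < p / r :=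
  stmt7_general vb ec p ε g r hr hp0 hpε hε hnb μ hμ hstat hlt
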